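/- arXiv:0905.4759 — 2 statements merged into one kernel-verified Lean document; each statement's English description precedes it below -/
import Mathlib

section
/- Let g be a Pick function analytic at x₁ ∈ ℝ, and let w₁ ∈ ℝ, v₁ > 0. Define the augmentation f(z) = w₁ + 1/(1/(v₁(z − x₁)) − g(z)). Then f is a Pick function, f is analytic at x₁, f(x₁) = w₁, and f'(x₁) = v₁. -/
/-! With `q z = v₁ (z - x₁)`, which maps the upper half-plane into itself, `1/q - g` takes values
in the lower half-plane there, and inversion sends the lower half-plane to the upper one.
Near `x₁` we have `1/(1/q - g) = q/(1 - q g)`, analytic at `x₁` because `q x₁ = 0`; the same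
vanishing makes the derivative at `x₁` equal to `q' = v₁`. -/

open Complex

def IsPick (g : ℂ → ℂ) : Prop :=
  ∀ z : ℂ, 0 < z.im → DifferentiableAt ℂ g z ∧ 0 ≤ (g z).im

namespace Complex

lemma ne_zero_of_im_ne_zero {c : ℂ} (hc : c.im ≠ 0) : c ≠ 0 :=
  fun h => hc (by simp [h])

lemma im_inv_nonneg_of_im_nonpos {c : ℂ} (hc : c.im ≤ 0) : 0 ≤ c⁻¹.im := by
  rw [inv_im]
  exact div_nonneg (neg_nonneg.2 hc) (normSq_nonneg c)

lemma im_inv_neg_of_im_pos {c : ℂ} (hc : 0 < c.im) : c⁻¹.im < 0 := by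
  rw [inv_im]
  exact div_neg_of_neg_of_pos (neg_neg_of_pos hc) (normSq_pos.2 (ne_zero_of_im_ne_zero hc.ne'))

end Complex

lemma one_div_one_div_sub {K : Type*} [Field K] {a : K} (b : K) (ha : a ≠ 0) :
    1 / (1 / a - b) = a / (1 - a * b) := by
  rw [show 1 / a - b = (1 - a * b) / a by field_simp, one_div_div]

lemma IsPick.augmentation {g : ℂ → ℂ} (hg : IsPick g) (x w : ℝ) {v : ℝ} (hv : 0 < v) :
    IsPick fun z => (w : ℂ) + 1 / (1 / ((v : ℂ) * (z - x)) - g z) := by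
  intro z hz
  have hq : 0 < ((v : ℂ) * (z - x)).im := by simpa [mul_im] using mul_pos hv hz
  have hden : (1 / ((v : ℂ) * (z - x)) - g z).im < 0 := by
    rw [sub_im, one_div]
    linarith [im_inv_neg_of_im_pos hq, (hg z hz).2]
  refine ⟨?_, by simpa [one_div] using im_inv_nonneg_of_im_nonpos hden.le⟩
  have hq0 := ne_zero_of_im_ne_zero hq.ne'
  have hden0 := ne_zero_of_im_ne_zero hden.ne
  have hgz := (hg z hz).1
  fun_prop (disch := assumption)

section RemovableSingularity

variable {𝕜 : Type*} [NontriviallyNormedField 𝕜] {q g : 𝕜 → 𝕜} {x : 𝕜}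

lemma AnalyticAt.div_one_sub_mul_of_eq_zero (hq : AnalyticAt 𝕜 q x) (hg : AnalyticAt 𝕜 g x)
    (hq0 : q x = 0) : AnalyticAt 𝕜 (fun z => q z / (1 - q z * g z)) x :=
  hq.div (analyticAt_const.sub (hq.mul hg)) (by simp [hq0])

lemma HasDerivAt.div_one_sub_mul_of_eq_zero {q' : 𝕜} (hq : HasDerivAt q q' x)
    (hg : DifferentiableAt 𝕜 g x) (hq0 : q x = 0) :
    HasDerivAt (fun z => q z / (1 - q z * g z)) q' x := by
  have hden : HasDerivAt (fun z => 1 - q z * g z) (0 - (q' * g x + q x * _root_.deriv g x)) x :=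
    (hasDerivAt_const x 1).sub (hq.mul hg.hasDerivAt)
  exact (hq.div hden (by simp [hq0])).congr_deriv (by simp [hq0])

end RemovableSingularity

theorem augmentation_at_regular_point_general (g : ℂ → ℂ)
    (hg : ∀ z : ℂ, 0 < z.im → DifferentiableAt ℂ g z ∧ 0 ≤ (g z).im)
    (x₁ w₁ v₁ : ℝ) (hv : 0 < v₁)
    (hx : AnalyticAt ℂ g (x₁ : ℂ))
    (f : ℂ → ℂ)
    (hf : ∀ z : ℂ, f z = (w₁ : ℂ) + 1 / (1 / ((v₁ : ℂ) * (z - (x₁ : ℂ))) - g z)) :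
    (∀ z : ℂ, 0 < z.im → DifferentiableAt ℂ f z ∧ 0 ≤ (f z).im) ∧
    (∃ F : ℂ → ℂ, AnalyticAt ℂ F (x₁ : ℂ) ∧
      (∀ᶠ z in nhdsWithin (x₁ : ℂ) {(x₁ : ℂ)}ᶜ, F z = f z) ∧
      F (x₁ : ℂ) = (w₁ : ℂ) ∧ deriv F (x₁ : ℂ) = (v₁ : ℂ)) := by
  obtain rfl : f = _ := funext hf
  set q : ℂ → ℂ := fun z => (v₁ : ℂ) * (z - x₁)
  have hq0 : q x₁ = 0 := by simp [q]
  have hq : HasDerivAt q v₁ x₁ := by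
    simpa using ((hasDerivAt_id (x₁ : ℂ)).sub_const (x₁ : ℂ)).const_mul (v₁ : ℂ)
  refine ⟨IsPick.augmentation hg x₁ w₁ hv, fun z => w₁ + q z / (1 - q z * g z), ?_, ?_,
    by simp [hq0], ?_⟩
  · exact analyticAt_const.add (AnalyticAt.div_one_sub_mul_of_eq_zero (by fun_prop) hx hq0)
  · filter_upwards [self_mem_nhdsWithin] with z hz
    have hqz : q z ≠ 0 := mul_ne_zero (ofReal_ne_zero.2 hv.ne') (sub_ne_zero.2 hz)
    rw [one_div_one_div_sub _ hqz]
  · exact ((hq.div_one_sub_mul_of_eq_zero hx.differentiableAt hq0).const_add _).deriv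

/-- augmentation at a point of analyticity. If `g` is a Pick
function analytic and real-valued near `x₁` and `v₁ > 0`, then
`f z = w₁ + 1/(1/(v₁ (z - x₁)) - g z)` is a Pick function on the upper
half-plane and extends analytically to `x₁` with value `w₁` and derivative
`v₁`. -/
theorem augmentation_at_regular_point (g : ℂ → ℂ)
    (hg : ∀ z : ℂ, 0 < z.im → DifferentiableAt ℂ g z ∧ 0 ≤ (g z).im)
    (x₁ w₁ v₁ : ℝ) (hv : 0 < v₁)
    (hx : AnalyticAt ℂ g (x₁ : ℂ))
    (hreal : ∀ᶠ t : ℝ in nhds x₁, (g (t : ℂ)).im = 0)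
    (f : ℂ → ℂ)
    (hf : ∀ z : ℂ, f z = (w₁ : ℂ) + 1 / (1 / ((v₁ : ℂ) * (z - (x₁ : ℂ))) - g z)) :
    (∀ z : ℂ, 0 < z.im → DifferentiableAt ℂ f z ∧ 0 ≤ (f z).im) ∧
    (∃ F : ℂ → ℂ, AnalyticAt ℂ F (x₁ : ℂ) ∧
      (∀ᶠ z in nhdsWithin (x₁ : ℂ) {(x₁ : ℂ)}ᶜ, F z = f z) ∧
      F (x₁ : ℂ) = (w₁ : ℂ) ∧ deriv F (x₁ : ℂ) = (v₁ : ℂ)) :=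
  augmentation_at_regular_point_general g hg x₁ w₁ v₁ hv hx f hf
end

section
/- Let M be a positive semidefinite real symmetric n×n matrix and i an index such that for every δ > 0, the matrix obtained by decreasing the (i,i) entry of M by δ fails to be positive semidefinite. If f is a Pick function analytic at each node x_j with f(x_j) = w_j, f'(x_j) ≤ v_j for all j, where M is the Pick matrix of the data, then f'(x_i) = v_i. -/
/-!
On a disc `ball c r`, the Cauchy integral formula applied to `g ζ / (r² - (ζ - c) * conj (w - c))`
writes the disc Pick kernel of `g` as `π⁻¹ ∫ Im g(e) / ((e - z) * conj (e - w)) dθ` over the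
boundary circle, so its quadratic forms are integrals of `Im g(e) * |∑ⱼ aⱼ / (e - zⱼ)|²` and are
nonnegative when `Im g ≥ 0`. The discs of radius `√(t² - 1)` about `t * I` exhaust the upper
half-plane and, rescaled by `t`, their kernels converge to the Nevanlinna–Pick kernel
`(f z - conj (f w)) / (z - conj w)`, which is therefore positive semidefinite. Sending the nodes
`x j + ε * I` down to the real axis gives the positive semidefinite Pick matrix with the true
derivatives `f' (x j)` on its diagonal. Raising diagonal entries preserves positivity, so if
`f' (x i) < v i` one could lower `v i` to `f' (x i)`, against the minimality of `v i`.
-/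

open Complex Matrix

open Metric Set Filter Topology intervalIntegral Real
open scoped ComplexConjugate ComplexOrder

theorem Matrix.PosSemidef.of_tendsto {𝕜 ι α : Type*} [RCLike 𝕜] [Fintype ι] {l : Filter α}
    [l.NeBot] {A : α → Matrix ι ι 𝕜} {B : Matrix ι ι 𝕜} (hA : ∀ᶠ a in l, (A a).PosSemidef)
    (hlim : Tendsto A l (𝓝 B)) : B.PosSemidef := by
  refine .of_dotProduct_mulVec_nonneg ?_ fun x => ?_
  · refine tendsto_nhds_unique ?_ hlim
    refine ((continuous_id.matrix_conjTranspose.tendsto B).comp hlim).congr' ?_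
    exact hA.mono fun a ha => ha.isHermitian
  · refine ge_of_tendsto ?_ (hA.mono fun a ha => ha.dotProduct_mulVec_nonneg x)
    exact ((continuous_const.dotProduct
      (continuous_id.matrix_mulVec continuous_const)).tendsto B).comp hlim

theorem Matrix.PosSemidef.of_map_ofReal {ι : Type*} [Fintype ι] {A : Matrix ι ι ℝ}
    (hA : (A.map ((↑) : ℝ → ℂ)).PosSemidef) : A.PosSemidef := by
  refine .of_dotProduct_mulVec_nonneg ?_ fun v => ?_
  · ext j k
    simpa [← ofReal_inj] using hA.isHermitian.apply j k
  · have := hA.dotProduct_mulVec_nonneg (fun j => (v j : ℂ))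
    simp only [dotProduct, mulVec, Pi.star_apply, RCLike.star_def, conj_ofReal,
      map_apply, ← ofReal_mul, ← ofReal_sum, zero_le_real] at this
    exact this

section Disc

variable {c : ℂ} {r : ℝ}

theorem sub_mul_conj_sub_of_mem_sphere {ζ : ℂ} (hζ : ζ ∈ sphere c r) (w : ℂ) :
    (ζ - c) * conj (ζ - w) = r ^ 2 - (ζ - c) * conj (w - c) := by
  have hnorm : (ζ - c) * conj (ζ - c) = (r : ℂ) ^ 2 := by
    rw [mul_conj, normSq_eq_norm_sq, ← Complex.dist_eq, mem_sphere.1 hζ]; push_cast; ring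
  rw [← hnorm, show ζ - w = (ζ - c) - (w - c) by ring, map_sub]; ring

theorem sq_sub_mul_conj_ne_zero (hr : 0 < r) {ζ w : ℂ} (hζ : ζ ∈ closedBall c r)
    (hw : w ∈ ball c r) : (r : ℂ) ^ 2 - (ζ - c) * conj (w - c) ≠ 0 := by
  have hlt : ‖(ζ - c) * conj (w - c)‖ < r ^ 2 := by
    rw [norm_mul, norm_conj, sq]
    exact mul_lt_mul_of_nonneg_of_pos' (mem_closedBall_iff_norm.1 hζ) (mem_ball_iff_norm.1 hw)
      (norm_nonneg _) hr
  intro h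
  rw [← sub_eq_zero.1 h, norm_pow, norm_real, Real.norm_of_nonneg hr.le] at hlt
  exact hlt.false

theorem integral_div_mul_conj_eq (hr : 0 < r) {g : ℂ → ℂ} (hg : DiffContOnCl ℂ g (ball c r))
    {z w : ℂ} (hz : z ∈ ball c r) (hw : w ∈ ball c r) :
    ∫ θ in 0..2 * π, g (circleMap c r θ) / ((circleMap c r θ - z) * conj (circleMap c r θ - w))
      = 2 * π * g z / (r ^ 2 - (z - c) * conj (w - c)) := by
  -- Cauchy's formula for `g / D`: on the circle `D ζ = (ζ - c) * conj (ζ - w)`, and the factor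
  -- `ζ - c` cancels the one in `dζ = I * (ζ - c) dθ`.
  set D : ℂ → ℂ := fun ζ => r ^ 2 - (ζ - c) * conj (w - c)
  have hD : DiffContOnCl ℂ (fun ζ => (D ζ)⁻¹) (ball c r) := by
    refine DiffContOnCl.inv (Differentiable.diffContOnCl (by fun_prop)) fun ζ hζ => ?_
    exact sq_sub_mul_conj_ne_zero hr (by rwa [closure_ball c hr.ne'] at hζ) hw
  have hcauchy := (hD.smul hg).circleIntegral_sub_inv_smul hz
  simp only [circleIntegral, deriv_circleMap, smul_eq_mul] at hcauchy
  have hpt : ∀ θ ∈ uIcc 0 (2 * π), circleMap 0 r θ * I * ((circleMap c r θ - z)⁻¹ *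
      ((D (circleMap c r θ))⁻¹ * g (circleMap c r θ))) = I * (g (circleMap c r θ) /
        ((circleMap c r θ - z) * conj (circleMap c r θ - w))) := by
    intro θ _
    have hc : circleMap c r θ - c ≠ 0 := sub_ne_zero.2 (circleMap_ne_center hr.ne')
    rw [← circleMap_sub_center c]
    simp only [D, ← sub_mul_conj_sub_of_mem_sphere (circleMap_mem_sphere c hr.le θ)]
    field_simp
  rw [integral_congr hpt, integral_const_mul] at hcauchy
  refine mul_left_cancel₀ I_ne_zero (hcauchy.trans ?_)
  simp only [D]
  ring

theorem continuous_inv_sub_mul_conj_sub_circleMap {z w : ℂ} (hz : z ∈ ball c r)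
    (hw : w ∈ ball c r) :
    Continuous fun θ => ((circleMap c r θ - z) * conj (circleMap c r θ - w))⁻¹ := by
  refine Continuous.inv₀ (by fun_prop) fun θ => mul_ne_zero ?_ ?_
  · exact sub_ne_zero.2 (circleMap_ne_mem_ball hz θ)
  · exact (map_ne_zero _).2 (sub_ne_zero.2 (circleMap_ne_mem_ball hw θ))

theorem integral_im_div_mul_conj_eq (hr : 0 < r) {g : ℂ → ℂ}
    (hg : DiffContOnCl ℂ g (ball c r)) {z w : ℂ} (hz : z ∈ ball c r) (hw : w ∈ ball c r) :
    ∫ θ in 0..2 * π, ((g (circleMap c r θ)).im : ℂ) /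
        ((circleMap c r θ - z) * conj (circleMap c r θ - w))
      = π * (g z - conj (g w)) / (I * (r ^ 2 - (z - c) * conj (w - c))) := by
  set e := circleMap c r
  have hge : Continuous fun θ => g (e θ) :=
    hg.continuousOn_ball.comp_continuous (continuous_circleMap c r)
      (circleMap_mem_closedBall c hr.le)
  have hk := continuous_inv_sub_mul_conj_sub_circleMap hz hw
  have hsplit : ∀ θ, ((g (e θ)).im : ℂ) / ((e θ - z) * conj (e θ - w))
      = (2 * I)⁻¹ * (g (e θ) / ((e θ - z) * conj (e θ - w)))
        - (2 * I)⁻¹ * (conj (g (e θ)) / ((e θ - z) * conj (e θ - w))) := by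
    intro θ
    rw [← mul_sub, ← sub_div, sub_conj]
    push_cast
    field_simp
  have hconj : ∫ θ in 0..2 * π, conj (g (e θ)) / ((e θ - z) * conj (e θ - w))
      = conj (2 * π * g w / (r ^ 2 - (w - c) * conj (z - c))) := by
    rw [← integral_div_mul_conj_eq hr hg hw hz, ← intervalIntegral_conj]
    refine integral_congr fun θ _ => ?_
    simp only [map_div₀, map_mul, conj_conj]
    ring
  have hD : (r : ℂ) ^ 2 - (z - c) * conj (w - c) ≠ 0 :=
    sq_sub_mul_conj_ne_zero hr (ball_subset_closedBall hz) hw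
  have hDconj : conj ((r : ℂ) ^ 2 - (w - c) * conj (z - c)) = r ^ 2 - (z - c) * conj (w - c) := by
    simp only [map_sub, map_mul, map_pow, conj_ofReal, conj_conj]
    ring
  have hint : ∀ h : ℝ → ℂ, Continuous h → IntervalIntegrable
      (fun θ => (2 * I)⁻¹ * (h θ / ((e θ - z) * conj (e θ - w)))) MeasureTheory.volume 0 (2 * π) :=
    fun h hh => ((hh.mul hk).const_mul _).intervalIntegrable _ _
  rw [integral_congr fun θ _ => hsplit θ, integral_sub (hint (fun θ => g (e θ)) hge)
      (hint (fun θ => conj (g (e θ))) (continuous_conj.comp hge)),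
    integral_const_mul, integral_const_mul, integral_div_mul_conj_eq hr hg hz hw, hconj,
    map_div₀, hDconj]
  simp only [map_mul, conj_ofReal, map_ofNat]
  field_simp

variable (c r) in
noncomputable def discPickKernel (g : ℂ → ℂ) (z w : ℂ) : ℂ :=
  (g z - conj (g w)) / (I * (r ^ 2 - (z - c) * conj (w - c)))

theorem star_dotProduct_discPickKernel_mulVec (hr : 0 < r) {g : ℂ → ℂ}
    (hg : DiffContOnCl ℂ g (ball c r)) {ι : Type*} [Fintype ι] {z : ι → ℂ}
    (hz : ∀ j, z j ∈ ball c r) (a : ι → ℂ) :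
    star a ⬝ᵥ (Matrix.of fun j k => discPickKernel c r g (z j) (z k)) *ᵥ a
      = ((π⁻¹ * ∫ θ in 0..2 * π, (g (circleMap c r θ)).im *
          normSq (∑ j, conj (a j) / (circleMap c r θ - z j)) : ℝ) : ℂ) := by
  set e := circleMap c r
  set F : ι → ι → ℝ → ℂ := fun j k θ => ((g (e θ)).im : ℂ) / ((e θ - z j) * conj (e θ - z k))
  have hK : ∀ j k, discPickKernel c r g (z j) (z k) = (π : ℂ)⁻¹ * ∫ θ in 0..2 * π, F j k θ := by
    intro j k
    rw [discPickKernel, integral_im_div_mul_conj_eq hr hg (hz j) (hz k), mul_div_assoc,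
      inv_mul_cancel_left₀ (ofReal_ne_zero.2 pi_ne_zero)]
  have hcont : ∀ j k, Continuous fun θ => conj (a j) * F j k θ * a k := fun j k =>
    (continuous_const.mul ((continuous_ofReal.comp (continuous_im.comp
      (hg.continuousOn_ball.comp_continuous (continuous_circleMap c r)
        (circleMap_mem_closedBall c hr.le)))).mul
      (continuous_inv_sub_mul_conj_sub_circleMap (hz j) (hz k)))).mul continuous_const
  have hgram : ∀ θ, ∑ j, ∑ k, conj (a j) * F j k θ * a k
      = (((g (e θ)).im * normSq (∑ j, conj (a j) / (e θ - z j)) : ℝ) : ℂ) := by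
    intro θ
    rw [ofReal_mul, ← mul_conj, map_sum, Finset.sum_mul_sum, Finset.mul_sum]
    refine Finset.sum_congr rfl fun j _ => ?_
    rw [Finset.mul_sum]
    refine Finset.sum_congr rfl fun k _ => ?_
    simp only [F, div_eq_mul_inv, mul_inv, map_mul, map_inv₀, conj_conj]
    ring
  calc _ = ∑ j, ∑ k, conj (a j) * ((π : ℂ)⁻¹ * ∫ θ in 0..2 * π, F j k θ) * a k := by
        simp only [dotProduct, mulVec, of_apply, Pi.star_apply, RCLike.star_def, hK,
          Finset.mul_sum, mul_assoc]
    _ = (π : ℂ)⁻¹ * ∫ θ in 0..2 * π, ∑ j, ∑ k, conj (a j) * F j k θ * a k := by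
        rw [integral_finsetSum fun j _ =>
            (continuous_finsetSum _ fun k _ => hcont j k).intervalIntegrable _ _,
          Finset.mul_sum]
        refine Finset.sum_congr rfl fun j _ => ?_
        rw [integral_finsetSum fun k _ => (hcont j k).intervalIntegrable _ _, Finset.mul_sum]
        refine Finset.sum_congr rfl fun k _ => ?_
        rw [integral_mul_const, integral_const_mul]
        ring
    _ = _ := by
        rw [integral_congr fun θ _ => hgram θ, intervalIntegral.integral_ofReal]
        push_cast
        rfl

theorem posSemidef_discPickKernel (hr : 0 < r) {g : ℂ → ℂ} (hg : DiffContOnCl ℂ g (ball c r))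
    (him : ∀ ζ ∈ sphere c r, 0 ≤ (g ζ).im) {ι : Type*} [Fintype ι] {z : ι → ℂ}
    (hz : ∀ j, z j ∈ ball c r) :
    (Matrix.of fun j k => discPickKernel c r g (z j) (z k)).PosSemidef := by
  refine .of_dotProduct_mulVec_nonneg ?_ fun a => ?_
  · ext j k
    simp only [discPickKernel, conjTranspose_apply, of_apply, RCLike.star_def, map_div₀, map_mul,
      map_sub, map_pow, conj_I, conj_ofReal, conj_conj]
    rw [← neg_div_neg_eq]
    congr 1 <;> ring
  rw [star_dotProduct_discPickKernel_mulVec hr hg hz, zero_le_real]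
  refine mul_nonneg (inv_nonneg.2 pi_pos.le) (integral_nonneg two_pi_pos.le fun θ _ => ?_)
  exact mul_nonneg (him _ (circleMap_mem_sphere c hr.le θ)) (normSq_nonneg _)

end Disc

noncomputable def pickKernel (f : ℂ → ℂ) (z w : ℂ) : ℂ := (f z - conj (f w)) / (z - conj w)

theorem im_pos_of_mem_closedBall {t r : ℝ} (hrt : r < t) {ζ : ℂ}
    (hζ : ζ ∈ closedBall (t * I) r) : 0 < ζ.im := by
  have h := (abs_im_le_norm (ζ - t * I)).trans (mem_closedBall_iff_norm.1 hζ)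
  simp only [sub_im, mul_im, ofReal_re, I_im, ofReal_im, I_re] at h
  linarith [(abs_le.1 h).1]

theorem eventually_mem_ball_sqrt {z : ℂ} (hz : 0 < z.im) :
    ∀ᶠ t : ℝ in atTop, z ∈ ball (t * I) √(t ^ 2 - 1) := by
  filter_upwards [eventually_gt_atTop ((z.re ^ 2 + z.im ^ 2 + 1) / (2 * z.im))] with t ht
  rw [div_lt_iff₀ (by positivity)] at ht
  rw [mem_ball_iff_norm, Real.lt_sqrt (norm_nonneg _), Complex.sq_norm, normSq_apply]
  simp only [sub_re, mul_re, ofReal_re, I_re, ofReal_im, I_im, sub_im, mul_im]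
  nlinarith

theorem tendsto_smul_discPickKernel (f : ℂ → ℂ) {z w : ℂ} (hzw : z - conj w ≠ 0) :
    Tendsto (fun t : ℝ => (t : ℂ) * discPickKernel (t * I) √(t ^ 2 - 1) f z w) atTop
      (𝓝 (pickKernel f z w)) := by
  have hinv : Tendsto (fun t : ℝ => (t : ℂ)⁻¹) atTop (𝓝 0) := by
    simpa using tendsto_inv_atTop_zero.ofReal
  have hden : Tendsto (fun t : ℝ => z - conj w - I * (1 + z * conj w) * (t : ℂ)⁻¹)
      atTop (𝓝 (z - conj w)) := by
    simpa using tendsto_const_nhds.sub (hinv.const_mul (I * (1 + z * conj w)))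
  refine (tendsto_const_nhds.div hden hzw).congr' ?_
  filter_upwards [eventually_gt_atTop 1] with t ht
  have ht0 : (t : ℂ) ≠ 0 := ofReal_ne_zero.2 (by linarith)
  have hr : ((√(t ^ 2 - 1) : ℝ) : ℂ) ^ 2 = t ^ 2 - 1 := by
    exact_mod_cast Real.sq_sqrt (by nlinarith : (0 : ℝ) ≤ t ^ 2 - 1)
  simp only [discPickKernel, Pi.div_apply, hr, map_sub, map_mul, conj_ofReal, conj_I]
  rw [← mul_div_mul_left _ _ ht0, mul_div_assoc]
  congr 2
  field_simp
  linear_combination (↑t * z - ↑t * conj w - ↑t ^ 2 * I) * I_sq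

theorem posSemidef_pickKernel {f : ℂ → ℂ} (hf : ∀ z : ℂ, 0 < z.im → DifferentiableAt ℂ f z)
    (him : ∀ z : ℂ, 0 < z.im → 0 ≤ (f z).im) {ι : Type*} [Fintype ι] {z : ι → ℂ}
    (hz : ∀ j, 0 < (z j).im) :
    (Matrix.of fun j k => pickKernel f (z j) (z k)).PosSemidef := by
  set K : ℝ → Matrix ι ι ℂ := fun t =>
    (t : ℂ) • Matrix.of fun j k => discPickKernel (t * I) √(t ^ 2 - 1) f (z j) (z k)
  have hpsd : ∀ᶠ t in atTop, (K t).PosSemidef := by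
    filter_upwards [eventually_gt_atTop 1,
      eventually_all.2 fun j => eventually_mem_ball_sqrt (hz j)] with t ht hzt
    have hr0 : 0 < √(t ^ 2 - 1) := Real.sqrt_pos.2 (by nlinarith)
    have hrt : √(t ^ 2 - 1) < t := (Real.sqrt_lt' (by linarith)).2 (by linarith)
    have hdisc : DiffContOnCl ℂ f (ball (t * I) √(t ^ 2 - 1)) :=
      DifferentiableOn.diffContOnCl_ball (U := {ζ : ℂ | 0 < ζ.im})
        (fun ζ (hζ : 0 < ζ.im) => (hf ζ hζ).differentiableWithinAt)
        fun ζ => im_pos_of_mem_closedBall hrt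
    refine (posSemidef_discPickKernel hr0 hdisc (fun ζ hζ => him ζ ?_) hzt).smul
      (zero_le_real.2 (by linarith))
    exact im_pos_of_mem_closedBall hrt (sphere_subset_closedBall hζ)
  refine Matrix.PosSemidef.of_tendsto hpsd
    (tendsto_pi_nhds.2 fun j => tendsto_pi_nhds.2 fun k => ?_)
  refine tendsto_smul_discPickKernel f fun h => ?_
  have := congrArg im h
  simp only [sub_im, conj_im, zero_im] at this
  linarith [hz j, hz k]

theorem pickKernel_self (f : ℂ → ℂ) (z : ℂ) : pickKernel f z z = ((f z).im / z.im : ℝ) := by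
  rw [pickKernel, sub_conj, sub_conj, mul_div_mul_right _ _ I_ne_zero]
  push_cast
  exact mul_div_mul_left _ _ two_ne_zero

theorem tendsto_pickKernel_self {f : ℂ → ℂ} {x : ℝ} {u : ℂ} (hd : HasDerivAt f u x)
    (hx : (f x).im = 0) :
    Tendsto (fun ε : ℝ => pickKernel f (x + ε * I) (x + ε * I)) (𝓝[>] 0) (𝓝 (u.re : ℂ)) := by
  -- The diagonal entry is `Im f (x + ε * I) / ε`, the imaginary part of a vertical difference
  -- quotient of `f`, so it tends to `Im (u * I) = Re u`.
  have hvert : HasDerivAt (fun ε : ℝ => f (x + ε * I)) (u * I) 0 := by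
    refine HasDerivAt.comp (𝕜 := ℝ) 0 (by simpa using hd) ?_
    simpa using ((hasDerivAt_id (0 : ℝ)).ofReal_comp.mul_const I).const_add (x : ℂ)
  have hslope := ((continuous_im.tendsto _).comp
    ((hasDerivAt_iff_tendsto_slope.1 hvert).mono_left (nhdsGT_le_nhdsNE 0))).ofReal
  rw [mul_I_im] at hslope
  refine hslope.congr' (eventually_of_mem self_mem_nhdsWithin fun ε (hε : 0 < ε) => ?_)
  dsimp only
  rw [pickKernel_self, Function.comp_apply, slope_def_module]
  simp only [sub_zero, real_smul, mul_im, ofReal_re, ofReal_im, ofReal_zero, zero_mul, add_zero,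
    sub_im, hx, add_im, I_re, I_im, mul_one, mul_zero, zero_add]
  rw [div_eq_inv_mul]

theorem tendsto_pickKernel_of_ne {f : ℂ → ℂ} {x y : ℝ} (hfx : ContinuousAt f x)
    (hfy : ContinuousAt f y) (hxy : x ≠ y) :
    Tendsto (fun ε : ℝ => pickKernel f (x + ε * I) (y + ε * I)) (𝓝[>] 0)
      (𝓝 (pickKernel f x y)) := by
  have hvert (a : ℝ) : Tendsto (fun ε : ℝ => (a : ℂ) + ε * I) (𝓝[>] 0) (𝓝 (a : ℂ)) := by
    have hcont : Continuous fun ε : ℝ => (a : ℂ) + ε * I := by fun_prop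
    simpa using (hcont.tendsto 0).mono_left nhdsWithin_le_nhds
  have hconj := continuous_conj.tendsto
  refine ((hfx.tendsto.comp (hvert x)).sub ((hconj _).comp (hfy.tendsto.comp (hvert y)))).div
    ((hvert x).sub ((hconj _).comp (hvert y))) ?_
  rw [conj_ofReal, sub_ne_zero, Ne, ofReal_inj]
  exact hxy

noncomputable def pickMatrix {ι : Type*} [DecidableEq ι] (x w v : ι → ℝ) : Matrix ι ι ℝ :=
  Matrix.of fun j k => if j = k then v j else (w j - w k) / (x j - x k)

theorem posSemidef_pickMatrix {ι : Type*} [Fintype ι] [DecidableEq ι] {f : ℂ → ℂ}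
    (hf : ∀ z : ℂ, 0 < z.im → DifferentiableAt ℂ f z) (him : ∀ z : ℂ, 0 < z.im → 0 ≤ (f z).im)
    {x w u : ι → ℝ} (hx : Function.Injective x) (hd : ∀ j, HasDerivAt f (u j) (x j))
    (hval : ∀ j, f (x j) = w j) :
    (pickMatrix x w u).PosSemidef := by
  refine .of_map_ofReal (Matrix.PosSemidef.of_tendsto (l := 𝓝[>] 0)
    (A := fun ε : ℝ => Matrix.of fun j k => pickKernel f (x j + ε * I) (x k + ε * I)) ?_ ?_)
  · filter_upwards [self_mem_nhdsWithin] with ε (hε : 0 < ε)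
    exact posSemidef_pickKernel hf him fun j => by simpa using hε
  refine tendsto_pi_nhds.2 fun j => tendsto_pi_nhds.2 fun k => ?_
  by_cases hjk : j = k
  · subst hjk
    simpa [pickMatrix] using tendsto_pickKernel_self (hd j) (by simp [hval])
  · have hjk' : (pickMatrix x w u).map ofReal j k = pickKernel f (x j) (x k) := by
      simp [pickMatrix, hjk, pickKernel, hval]
    rw [hjk']
    exact tendsto_pickKernel_of_ne (hd j).continuousAt (hd k).continuousAt (hx.ne hjk)

theorem pickMatrix_add_diagonal {ι : Type*} [DecidableEq ι] (x w u d : ι → ℝ) :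
    pickMatrix x w u + diagonal d = pickMatrix x w (u + d) := by
  ext j k
  by_cases hjk : j = k
  · subst hjk; simp [pickMatrix]
  · simp [pickMatrix, hjk]

theorem Matrix.PosSemidef.pickMatrix_of_le {ι : Type*} [Fintype ι] [DecidableEq ι]
    {x w u v : ι → ℝ} (hu : (pickMatrix x w u).PosSemidef) (huv : u ≤ v) :
    (pickMatrix x w v).PosSemidef := by
  simpa [pickMatrix_add_diagonal] using
    hu.add (PosSemidef.diagonal (d := v - u) (sub_nonneg.2 huv))

theorem pickMatrix_sub_diagonal {ι : Type*} [DecidableEq ι] (x w v d : ι → ℝ) :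
    pickMatrix x w v - diagonal d = pickMatrix x w (v - d) := by
  rw [sub_eq_iff_eq_add, pickMatrix_add_diagonal, sub_add_cancel]

theorem derivative_attained_at_minimal_index_general {n : ℕ}
    (x w v : Fin n → ℝ) (hinj : Function.Injective x)
    (M : Matrix (Fin n) (Fin n) ℝ)
    (hM : ∀ j k, M j k = if j = k then v j else (w j - w k) / (x j - x k))
    (i : Fin n)
    (hmin : ∀ δ : ℝ, 0 < δ → ¬ (M - Matrix.single i i δ).PosSemidef)
    (f : ℂ → ℂ)
    (hf : ∀ z : ℂ, 0 < z.im → DifferentiableAt ℂ f z ∧ 0 ≤ (f z).im)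
    (hA : ∀ j, AnalyticAt ℂ f ((x j : ℝ) : ℂ))
    (hval : ∀ j, f ((x j : ℝ) : ℂ) = ((w j : ℝ) : ℂ))
    (u : Fin n → ℝ)
    (hder : ∀ j, deriv f ((x j : ℝ) : ℂ) = ((u j : ℝ) : ℂ))
    (hle : ∀ j, u j ≤ v j) :
    u i = v i := by
  by_contra hne
  have hlt : u i < v i := (hle i).lt_of_ne hne
  have hMv : M = pickMatrix x w v := Matrix.ext hM
  have hpick : (pickMatrix x w u).PosSemidef :=
    posSemidef_pickMatrix (fun z hz => (hf z hz).1) (fun z hz => (hf z hz).2) hinj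
      (fun j => hder j ▸ (hA j).differentiableAt.hasDerivAt) hval
  refine hmin (v i - u i) (sub_pos.2 hlt) ?_
  rw [hMv, ← diagonal_single, pickMatrix_sub_diagonal]
  refine hpick.pickMatrix_of_le fun j => ?_
  rcases eq_or_ne j i with rfl | hji
  · simp
  · simpa [hji] using hle j

/-- if the Pick matrix `M` of the data is positive semidefinite
but decreasing its `(i,i)` entry by any `δ > 0` destroys positive
semidefiniteness, then every Pick-function solution of the relaxed problem
attains the derivative bound at the node `i`: `f'(x_i) = v_i`. -/
theorem derivative_attained_at_minimal_index {n : ℕ}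
    (x w v : Fin n → ℝ) (hinj : Function.Injective x)
    (M : Matrix (Fin n) (Fin n) ℝ)
    (hM : ∀ j k, M j k = if j = k then v j else (w j - w k) / (x j - x k))
    (hpsd : M.PosSemidef)
    (i : Fin n)
    (hmin : ∀ δ : ℝ, 0 < δ → ¬ (M - Matrix.single i i δ).PosSemidef)
    (f : ℂ → ℂ)
    (hf : ∀ z : ℂ, 0 < z.im → DifferentiableAt ℂ f z ∧ 0 ≤ (f z).im)
    (hA : ∀ j, AnalyticAt ℂ f ((x j : ℝ) : ℂ))
    (hreal : ∀ j, ∀ᶠ t : ℝ in nhds (x j), (f (t : ℂ)).im = 0)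
    (hval : ∀ j, f ((x j : ℝ) : ℂ) = ((w j : ℝ) : ℂ))
    (u : Fin n → ℝ)
    (hder : ∀ j, deriv f ((x j : ℝ) : ℂ) = ((u j : ℝ) : ℂ))
    (hle : ∀ j, u j ≤ v j) :
    u i = v i :=
  derivative_attained_at_minimal_index_general x w v hinj M hM i hmin f hf hA hval u hder hle
end
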